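/- arXiv:1904.00622 — 4 statements merged into one kernel-verified Lean document; each statement's English description precedes it below -/
import Mathlib

section
/- For γ > 1 and c_v > 0, the function p(ρ,S) = ρ^γ exp(S/(c_v ρ)) defined for ρ > 0, S ∈ ℝ is strictly convex: its Hessian matrix is positive definite at every point of the domain {ρ > 0}. -/
open Real

noncomputable def pres (γ cv ρ S : ℝ) : ℝ := ρ ^ γ * Real.exp (S / (cv * ρ))

/-! With `u = S / (c_v ρ)`, every derivative of `p` is `p` times a rational expression:
`∂_ρ p = p (γ - u) / ρ` and `∂_S p = p / (c_v ρ)`, hence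
`∂²_ρ p = p ((γ - 1 - u)² + γ - 1) / ρ²`, `∂²_S p = p / (c_v ρ)²`, `∂_S ∂_ρ p = p (γ - 1 - u) / (c_v ρ²)`.
The square `(γ - 1 - u)²` cancels in the determinant, which is `p² (γ - 1) / (c_v ρ²)²`. -/

section
variable {γ cv ρ S : ℝ}

theorem hasDerivAt_const_div_const_mul (hcv : cv ≠ 0) (hρ : ρ ≠ 0) :
    HasDerivAt (fun r => S / (cv * r)) (-(S / (cv * ρ)) / ρ) ρ := by
  refine ((hasDerivAt_const ρ S).div ((hasDerivAt_id' ρ).const_mul cv)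
    (mul_ne_zero hcv hρ)).congr_deriv ?_
  field_simp
  ring

theorem hasDerivAt_pres_fst (hcv : cv ≠ 0) (hρ : ρ ≠ 0) :
    HasDerivAt (fun r => pres γ cv r S) (pres γ cv ρ S * (γ - S / (cv * ρ)) / ρ) ρ := by
  refine ((Real.hasDerivAt_rpow_const (p := γ) (Or.inl hρ)).mul
    (hasDerivAt_const_div_const_mul hcv hρ).exp).congr_deriv ?_
  rw [pres, Real.rpow_sub_one hρ]
  field_simp
  ring

theorem hasDerivAt_pres_snd :
    HasDerivAt (fun s => pres γ cv ρ s) (pres γ cv ρ S / (cv * ρ)) S := by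
  refine (((hasDerivAt_id' S).div_const (cv * ρ)).exp.const_mul (ρ ^ γ)).congr_deriv ?_
  rw [pres]
  ring

theorem deriv_deriv_pres_snd :
    deriv (fun s => deriv (fun s' => pres γ cv ρ s') s) S = pres γ cv ρ S / (cv * ρ) ^ 2 := by
  have h : deriv (fun s => pres γ cv ρ s) = fun s => pres γ cv ρ s / (cv * ρ) :=
    funext fun _ => hasDerivAt_pres_snd.deriv
  rw [h, (hasDerivAt_pres_snd.div_const (cv * ρ)).deriv]
  ring

theorem deriv_deriv_pres_fst (hcv : cv ≠ 0) (hρ : ρ ≠ 0) :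
    deriv (fun r => deriv (fun r' => pres γ cv r' S) r) ρ =
      pres γ cv ρ S / ρ ^ 2 * ((γ - 1 - S / (cv * ρ)) ^ 2 + (γ - 1)) := by
  have hev : (fun r => deriv (fun r' => pres γ cv r' S) r) =ᶠ[nhds ρ]
      fun r => pres γ cv r S * (γ - S / (cv * r)) / r := by
    filter_upwards [isOpen_ne.mem_nhds hρ] with r hr
    exact (hasDerivAt_pres_fst hcv hr).deriv
  rw [hev.deriv_eq, (((hasDerivAt_pres_fst hcv hρ).fun_mul ((hasDerivAt_const ρ γ).fun_sub
    (hasDerivAt_const_div_const_mul hcv hρ))).fun_div (hasDerivAt_id' ρ) hρ).deriv]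
  field_simp
  ring

theorem deriv_deriv_pres_snd_fst (hcv : cv ≠ 0) (hρ : ρ ≠ 0) :
    deriv (fun s => deriv (fun r => pres γ cv r s) ρ) S =
      pres γ cv ρ S / (cv * ρ ^ 2) * (γ - 1 - S / (cv * ρ)) := by
  have h : (fun s => deriv (fun r => pres γ cv r s) ρ) =
      fun s => pres γ cv ρ s * (γ - s / (cv * ρ)) / ρ :=
    funext fun _ => (hasDerivAt_pres_fst hcv hρ).deriv
  rw [h, ((hasDerivAt_pres_snd.fun_mul ((hasDerivAt_const S γ).fun_sub
    ((hasDerivAt_id' S).div_const (cv * ρ)))).div_const ρ).deriv]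
  field_simp
  ring
end

/-- Strict convexity of the pressure `p(ρ,S) = ρ^γ exp(S/(c_v ρ))` on `{ρ > 0}`:
its Hessian is positive definite (positive `∂²p/∂ρ²` and positive determinant). -/
theorem pressure_strictly_convex (γ cv : ℝ) (hγ : 1 < γ) (hcv : 0 < cv) :
    ∀ ρ S : ℝ, 0 < ρ →
      0 < deriv (fun r => deriv (fun r' => pres γ cv r' S) r) ρ ∧
      0 < deriv (fun r => deriv (fun r' => pres γ cv r' S) r) ρ *
            deriv (fun s => deriv (fun s' => pres γ cv ρ s') s) S -
          (deriv (fun s => deriv (fun r => pres γ cv r s) ρ) S) ^ 2 := by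
  intro ρ S hρ
  rw [deriv_deriv_pres_fst hcv.ne' hρ.ne', deriv_deriv_pres_snd,
    deriv_deriv_pres_snd_fst hcv.ne' hρ.ne']
  set p := pres γ cv ρ S
  set u := S / (cv * ρ)
  have hp : 0 < p := mul_pos (rpow_pos_of_pos hρ γ) (exp_pos _)
  have hγ' : 0 < γ - 1 := sub_pos.mpr hγ
  have hdet : p / ρ ^ 2 * ((γ - 1 - u) ^ 2 + (γ - 1)) * (p / (cv * ρ) ^ 2) -
      (p / (cv * ρ ^ 2) * (γ - 1 - u)) ^ 2 = p ^ 2 * (γ - 1) / (cv * ρ ^ 2) ^ 2 := by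
    field_simp
    ring
  rw [hdet]
  constructor <;> positivity
end

section
/- The extension of ρ^γ exp(S/(c_v ρ)) to ρ = 0 by the value 0 when S ≤ 0 and +∞ when S > 0 yields a convex lower semicontinuous function on [0,∞) × ℝ with values in [0,∞]. -/
open scoped ENNReal

/-- The extended pressure: `ρ^γ exp(S/(c_v ρ))` for `ρ > 0`, `0` for `ρ = 0, S ≤ 0`,
and `+∞` for `ρ = 0, S > 0`. -/
noncomputable def pressExt (γ cv : ℝ) (x : ℝ × ℝ) : ℝ≥0∞ :=
  if 0 < x.1 then ENNReal.ofReal (x.1 ^ γ * Real.exp (x.2 / (cv * x.1)))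
  else if x.2 ≤ 0 then 0 else ∞

/-!
The function is the supremum of the positive parts of its tangent planes at the points with
`ρ > 0`; a supremum of positive parts of affine functions is convex and lower semicontinuous.
That the tangent planes lie below the graph comes down to `1 + γ (u - 1) + u t ≤ u^γ e^t`, and at
`ρ = 0, S > 0` the tangent planes are unbounded, which produces the value `+∞`.
-/

section SupOfConvex

variable {E ι : Type*}

theorem iSup_ofReal_combo_le [AddCommGroup E] [Module ℝ E] {s : Set E} {L : ι → E → ℝ}
    (hL : ∀ i, ConvexOn ℝ s (L i)) {x y : E} (hx : x ∈ s) (hy : y ∈ s) {t : ℝ} (ht₀ : 0 ≤ t)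
    (ht₁ : t ≤ 1) :
    ⨆ i, ENNReal.ofReal (L i (t • x + (1 - t) • y)) ≤
      ENNReal.ofReal t * (⨆ i, ENNReal.ofReal (L i x)) +
        ENNReal.ofReal (1 - t) * ⨆ i, ENNReal.ofReal (L i y) := by
  refine iSup_le fun i => ?_
  calc ENNReal.ofReal (L i (t • x + (1 - t) • y))
      ≤ ENNReal.ofReal (t * L i x + (1 - t) * L i y) :=
        ENNReal.ofReal_le_ofReal ((hL i).2 hx hy ht₀ (by linarith) (by ring))
    _ ≤ ENNReal.ofReal (t * L i x) + ENNReal.ofReal ((1 - t) * L i y) := ENNReal.ofReal_add_le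
    _ = ENNReal.ofReal t * ENNReal.ofReal (L i x) +
          ENNReal.ofReal (1 - t) * ENNReal.ofReal (L i y) := by
        rw [ENNReal.ofReal_mul ht₀, ENNReal.ofReal_mul (by linarith)]
    _ ≤ _ := by
        gcongr
        · exact le_iSup (fun j => ENNReal.ofReal (L j x)) i
        · exact le_iSup (fun j => ENNReal.ofReal (L j y)) i

theorem lowerSemicontinuous_iSup_ofReal [TopologicalSpace E] {L : ι → E → ℝ}
    (hL : ∀ i, LowerSemicontinuous (L i)) :
    LowerSemicontinuous fun x => ⨆ i, ENNReal.ofReal (L i x) :=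
  lowerSemicontinuous_iSup fun i =>
    ENNReal.continuous_ofReal.comp_lowerSemicontinuous (hL i) ENNReal.ofReal_mono

end SupOfConvex

theorem one_add_mul_sub_one_add_mul_le_rpow_mul_exp {γ : ℝ} (hγ : 1 ≤ γ) {u : ℝ} (hu : 0 < u)
    (t : ℝ) : 1 + γ * (u - 1) + u * t ≤ u ^ γ * Real.exp t := by
  have hlog : u - 1 ≤ u * Real.log u := by
    have h := mul_le_mul_of_nonneg_left (Real.one_sub_inv_le_log_of_pos hu) hu.le
    rwa [mul_sub, mul_one, mul_inv_cancel₀ hu.ne'] at h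
  have hexp : u ^ γ * Real.exp t = u * Real.exp ((γ - 1) * Real.log u + t) := by
    rw [Real.exp_add, mul_comm (γ - 1), ← Real.rpow_def_of_pos hu, Real.rpow_sub_one hu.ne']
    field_simp
  calc 1 + γ * (u - 1) + u * t ≤ u * (1 + ((γ - 1) * Real.log u + t)) := by nlinarith
    _ ≤ u * Real.exp ((γ - 1) * Real.log u + t) := by
        gcongr; linarith [Real.add_one_le_exp ((γ - 1) * Real.log u + t)]
    _ = u ^ γ * Real.exp t := hexp.symm

/-- The tangent plane of `(ρ, S) ↦ ρ^γ exp(S/(cv ρ))` at `(ρ₀, cv ρ₀ σ)`, where `p = (ρ₀, σ)`. -/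
noncomputable def pressTangent (γ cv : ℝ) (p x : ℝ × ℝ) : ℝ :=
  p.1 ^ (γ - 1) * Real.exp p.2 * ((γ - p.2) * x.1 + x.2 / cv - (γ - 1) * p.1)

section PressTangent

variable {γ cv : ℝ} {p x : ℝ × ℝ}

theorem convexOn_pressTangent : ConvexOn ℝ Set.univ (pressTangent γ cv p) := by
  refine ⟨convex_univ, fun x _ y _ a b _ _ hab => le_of_eq ?_⟩
  simp only [pressTangent, Prod.fst_add, Prod.snd_add, Prod.smul_fst, Prod.smul_snd, smul_eq_mul]
  linear_combination (p.1 ^ (γ - 1) * Real.exp p.2 * (γ - 1) * p.1) * hab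

theorem continuous_pressTangent : Continuous (pressTangent γ cv p) := by
  unfold pressTangent; fun_prop

theorem pressTangent_le (hγ : 1 ≤ γ) (hcv : cv ≠ 0) (hp : 0 < p.1) (hx : 0 < x.1) :
    pressTangent γ cv p x ≤ x.1 ^ γ * Real.exp (x.2 / (cv * x.1)) := by
  have key := one_add_mul_sub_one_add_mul_le_rpow_mul_exp hγ (div_pos hx hp)
    (x.2 / (cv * x.1) - p.2)
  have hpγ : p.1 ^ γ = p.1 ^ (γ - 1) * p.1 := by
    rw [Real.rpow_sub_one hp.ne']; field_simp
  calc pressTangent γ cv p x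
      = p.1 ^ γ * Real.exp p.2 *
          (1 + γ * (x.1 / p.1 - 1) + x.1 / p.1 * (x.2 / (cv * x.1) - p.2)) := by
        rw [pressTangent, hpγ]; field_simp; ring
    _ ≤ p.1 ^ γ * Real.exp p.2 * ((x.1 / p.1) ^ γ * Real.exp (x.2 / (cv * x.1) - p.2)) := by
        gcongr
    _ = x.1 ^ γ * Real.exp (x.2 / (cv * x.1)) := by
        rw [Real.div_rpow hx.le hp.le, Real.exp_sub]
        have : 0 < p.1 ^ γ := by positivity
        field_simp

theorem pressTangent_nonpos (hγ : 1 ≤ γ) (hcv : 0 < cv) (hp : 0 < p.1) (hx₁ : x.1 = 0)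
    (hx₂ : x.2 ≤ 0) : pressTangent γ cv p x ≤ 0 := by
  rw [pressTangent, hx₁, mul_zero, zero_add]
  have : x.2 / cv ≤ 0 := div_nonpos_of_nonpos_of_nonneg hx₂ hcv.le
  have : 0 ≤ (γ - 1) * p.1 := mul_nonneg (by linarith) hp.le
  exact mul_nonpos_of_nonneg_of_nonpos (by positivity) (by linarith)

theorem pressTangent_self (hcv : cv ≠ 0) (hx : 0 < x.1) :
    pressTangent γ cv (x.1, x.2 / (cv * x.1)) x = x.1 ^ γ * Real.exp (x.2 / (cv * x.1)) := by
  rw [pressTangent, Real.rpow_sub_one hx.ne']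
  field_simp
  ring

/-- With `ρ₀ = S / (cv γ)` the tangent plane at `(ρ₀, cv ρ₀ σ)` takes the value `ρ₀^γ e^σ`
at `(0, S)`. -/
theorem exists_le_pressTangent (hγ : 1 ≤ γ) (hcv : 0 < cv) (hx₁ : x.1 = 0) (hx₂ : 0 < x.2)
    (M : ℝ) : ∃ p : ℝ × ℝ, 0 < p.1 ∧ M ≤ pressTangent γ cv p x := by
  set ρ₀ := x.2 / (cv * γ)
  have hρ₀ : 0 < ρ₀ := by positivity
  have hρ₀γ : 0 < ρ₀ ^ γ := by positivity
  refine ⟨(ρ₀, M / ρ₀ ^ γ), hρ₀, ?_⟩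
  have hval : pressTangent γ cv (ρ₀, M / ρ₀ ^ γ) x = ρ₀ ^ γ * Real.exp (M / ρ₀ ^ γ) := by
    rw [pressTangent, hx₁, Real.rpow_sub_one hρ₀.ne']
    simp only [ρ₀]
    field_simp
    ring
  calc M = ρ₀ ^ γ * (M / ρ₀ ^ γ) := by field_simp
    _ ≤ ρ₀ ^ γ * Real.exp (M / ρ₀ ^ γ) := by
        gcongr; linarith [Real.add_one_le_exp (M / ρ₀ ^ γ)]
    _ = _ := hval.symm

end PressTangent

theorem pressExt_eq_iSup_pressTangent {γ cv : ℝ} (hγ : 1 ≤ γ) (hcv : 0 < cv) {x : ℝ × ℝ}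
    (hx : 0 ≤ x.1) :
    pressExt γ cv x = ⨆ p : {p : ℝ × ℝ // 0 < p.1}, ENNReal.ofReal (pressTangent γ cv p x) := by
  apply le_antisymm
  · rcases hx.lt_or_eq with hx₁ | hx₁
    · rw [pressExt, if_pos hx₁, ← pressTangent_self hcv.ne' hx₁]
      exact le_iSup (fun p : {p : ℝ × ℝ // 0 < p.1} => ENNReal.ofReal (pressTangent γ cv p x))
        ⟨(x.1, x.2 / (cv * x.1)), hx₁⟩
    rw [pressExt, if_neg hx₁.not_lt]
    split_ifs with hx₂
    · exact zero_le
    refine top_le_iff.2 (iSup_eq_top.2 fun b hb => ?_)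
    obtain ⟨p, hp, hM⟩ := exists_le_pressTangent hγ hcv hx₁.symm (not_le.1 hx₂) (b.toReal + 1)
    exact ⟨⟨p, hp⟩, (ENNReal.lt_ofReal_iff_toReal_lt hb.ne).2 (by linarith)⟩
  · refine iSup_le fun ⟨p, hp⟩ => ?_
    rcases hx.lt_or_eq with hx₁ | hx₁
    · rw [pressExt, if_pos hx₁]
      exact ENNReal.ofReal_le_ofReal (pressTangent_le hγ hcv.ne' hp hx₁)
    rw [pressExt, if_neg hx₁.not_lt]
    split_ifs with hx₂
    · exact (ENNReal.ofReal_eq_zero.2 (pressTangent_nonpos hγ hcv hp hx₁.symm hx₂)).le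
    · exact le_top

/-- The extension of `ρ^γ exp(S/(c_v ρ))` by `0` for `ρ = 0, S ≤ 0` and `+∞` for
`ρ = 0, S > 0` is convex and lower semicontinuous on `[0,∞) × ℝ` with values in `[0,∞]`. -/
theorem pressExt_convex_lsc (γ cv : ℝ) (hγ : 1 < γ) (hcv : 0 < cv) :
    (∀ x y : ℝ × ℝ, 0 ≤ x.1 → 0 ≤ y.1 → ∀ t : ℝ, 0 ≤ t → t ≤ 1 →
        pressExt γ cv (t • x + (1 - t) • y) ≤
          ENNReal.ofReal t * pressExt γ cv x + ENNReal.ofReal (1 - t) * pressExt γ cv y) ∧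
    LowerSemicontinuousOn (pressExt γ cv) {x | 0 ≤ x.1} := by
  have hrepr := fun (x : ℝ × ℝ) (hx : 0 ≤ x.1) => pressExt_eq_iSup_pressTangent hγ.le hcv hx
  constructor
  · intro x y hx hy t ht₀ ht₁
    have hxy : 0 ≤ (t • x + (1 - t) • y).1 := by
      show 0 ≤ t * x.1 + (1 - t) * y.1
      nlinarith
    rw [hrepr x hx, hrepr y hy, hrepr _ hxy]
    exact iSup_ofReal_combo_le (L := fun p : {p : ℝ × ℝ // 0 < p.1} => pressTangent γ cv p)
      (fun _ => convexOn_pressTangent) (Set.mem_univ x) (Set.mem_univ y) ht₀ ht₁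
  · have hsup := lowerSemicontinuous_iSup_ofReal fun p : {p : ℝ × ℝ // 0 < p.1} =>
      (continuous_pressTangent (γ := γ) (cv := cv) (p := p)).lowerSemicontinuous
    exact fun x hx =>
      (LowerSemicontinuousAt.lowerSemicontinuousWithinAt _ (hsup x)).congr_of_eventuallyEq hx
        (eventually_nhdsWithin_of_forall fun y hy => (hrepr y hy).symm)
end

section
/- Constant states uniquely maximize total entropy at fixed mass and energy: if |Ω| = 1, ρ̄ > 0 and S̄ are constants, ρ, S ∈ L¹(Ω) with ρ ≥ 0, ∫ρ = ρ̄, ∫S ≥ S̄, and ∫ Φ(ρ,S) = Φ(ρ̄, S̄) where Φ(ρ,S) = ρ^γ exp(S/(c_v ρ)) is strictly convex and strictly increasing in S, then ρ = ρ̄ and S = S̄ almost everywhere. -/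
open MeasureTheory
open scoped ENNReal

/-- The extended internal energy `Φ(ρ,S) = ρ^γ exp(S/(c_v ρ))` for `ρ > 0`,
`0` for `ρ = 0, S ≤ 0`, `∞` for `ρ = 0, S > 0`. -/
noncomputable def PhiExt (γ cv : ℝ) (ρ S : ℝ) : ℝ≥0∞ :=
  if 0 < ρ then ENNReal.ofReal (ρ ^ γ * Real.exp (S / (cv * ρ)))
  else if S ≤ 0 then 0 else ∞

/-! The tangent plane `L` of `Φ` at `(ρ̄, S̄)` lies below `Φ` on its effective domain and touches
it only at `(ρ̄, S̄)`: for `r > 0`, `Φ - L` is a positive combination of two values of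
`exp u - 1 - u`, which vanish together only at `(ρ̄, S̄)`; at `r = 0`, finiteness of `Φ` forces
`s ≤ 0`, where `L < 0 = Φ`. Integrating, `L(ρ̄, ∫ S) = ∫ L(ρ, S) ≤ ∫ Φ(ρ, S) = Φ(ρ̄, S̄) = L(ρ̄, S̄)`,
and `L` is strictly increasing in `s`, so `∫ S = S̄`. Then `Φ - L ≥ 0` has integral `0` along
`(ρ, S)`, so `(ρ, S) = (ρ̄, S̄)` a.e. -/

open Real

noncomputable def expGap (u : ℝ) : ℝ := exp u - 1 - u

lemma expGap_nonneg (u : ℝ) : 0 ≤ expGap u := by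
  unfold expGap
  linarith [add_one_le_exp u]

lemma eq_zero_of_expGap_eq_zero {u : ℝ} (h : expGap u = 0) : u = 0 := by
  by_contra hu
  unfold expGap at h
  linarith [add_one_lt_exp hu]

/-- The tangent plane of `Φ` at `(ρbar, Sbar)`: with `K = ρbar ^ (γ - 1) * exp (Sbar / (cv * ρbar))`
one has `Φ(ρbar, Sbar) = K * ρbar`, `∂Φ/∂ρ = K * (γ - Sbar / (cv * ρbar))` and `∂Φ/∂S = K / cv`. -/
noncomputable def phiTangent (γ cv ρbar Sbar r s : ℝ) : ℝ :=
  ρbar ^ (γ - 1) * exp (Sbar / (cv * ρbar)) *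
    (ρbar + (γ - Sbar / (cv * ρbar)) * (r - ρbar) + (s - Sbar) / cv)

section Tangent

variable {γ cv ρbar Sbar : ℝ}

lemma phiTangent_self (hρbar : 0 < ρbar) :
    phiTangent γ cv ρbar Sbar ρbar Sbar = ρbar ^ γ * exp (Sbar / (cv * ρbar)) := by
  rw [phiTangent, rpow_sub_one hρbar.ne']
  field_simp
  ring

lemma strictMono_phiTangent (hcv : 0 < cv) (hρbar : 0 < ρbar) (r : ℝ) :
    StrictMono (phiTangent γ cv ρbar Sbar r) := by
  intro s₁ s₂ hs
  unfold phiTangent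
  gcongr

lemma phiTangent_zero_neg (hγ : 1 < γ) (hcv : 0 < cv) (hρbar : 0 < ρbar) {s : ℝ}
    (hs : s ≤ 0) : phiTangent γ cv ρbar Sbar 0 s < 0 := by
  have hzero : phiTangent γ cv ρbar Sbar 0 s
      = ρbar ^ (γ - 1) * exp (Sbar / (cv * ρbar)) * ((1 - γ) * ρbar + s / cv) := by
    unfold phiTangent
    field_simp
    ring
  have hs' : s / cv ≤ 0 := div_nonpos_of_nonpos_of_nonneg hs hcv.le
  rw [hzero]
  exact mul_neg_of_pos_of_neg (by positivity) (by nlinarith)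

lemma rpow_mul_exp_sub_phiTangent (hρbar : 0 < ρbar) {r : ℝ} (hr : 0 < r) (s : ℝ) :
    r ^ γ * exp (s / (cv * r)) - phiTangent γ cv ρbar Sbar r s =
      ρbar ^ (γ - 1) * exp (Sbar / (cv * ρbar)) * r *
        (expGap (s / (cv * r) - Sbar / (cv * ρbar) - (γ - 1) * log (ρbar / r))
          + (γ - 1) * expGap (log (ρbar / r))) := by
  set w := log (ρbar / r) with hw
  have hexpw : exp w = ρbar / r := exp_log (div_pos hρbar hr)
  have hsplit : r ^ γ * exp (s / (cv * r)) = ρbar ^ (γ - 1) * exp (Sbar / (cv * ρbar)) * r *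
      exp (s / (cv * r) - Sbar / (cv * ρbar) - (γ - 1) * w) :=
    calc r ^ γ * exp (s / (cv * r)) = exp (log r * γ + s / (cv * r)) := by
          rw [rpow_def_of_pos hr, exp_add]
      _ = exp (log ρbar * (γ - 1)) * exp (Sbar / (cv * ρbar)) * exp (log r) *
            exp (s / (cv * r) - Sbar / (cv * ρbar) - (γ - 1) * w) := by
          rw [← exp_add, ← exp_add, ← exp_add, hw, log_div hρbar.ne' hr.ne']
          congr 1
          ring
      _ = _ := by rw [exp_log hr, rpow_def_of_pos hρbar]
  rw [hsplit, expGap, expGap, hexpw, phiTangent]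
  field_simp
  ring

lemma phiTangent_le_rpow_mul_exp (hγ : 1 < γ) (hρbar : 0 < ρbar) {r : ℝ} (hr : 0 < r)
    (s : ℝ) : phiTangent γ cv ρbar Sbar r s ≤ r ^ γ * exp (s / (cv * r)) := by
  rw [← sub_nonneg, rpow_mul_exp_sub_phiTangent hρbar hr]
  have := expGap_nonneg (log (ρbar / r))
  have := expGap_nonneg (s / (cv * r) - Sbar / (cv * ρbar) - (γ - 1) * log (ρbar / r))
  have : 0 ≤ γ - 1 := by linarith
  positivity

lemma eq_of_rpow_mul_exp_eq_phiTangent (hγ : 1 < γ) (hcv : 0 < cv) (hρbar : 0 < ρbar)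
    {r s : ℝ} (hr : 0 < r) (h : r ^ γ * exp (s / (cv * r)) = phiTangent γ cv ρbar Sbar r s) :
    r = ρbar ∧ s = Sbar := by
  rw [← sub_eq_zero, rpow_mul_exp_sub_phiTangent hρbar hr] at h
  obtain ⟨hgap_t, hgap_w⟩ := (add_eq_zero_iff_of_nonneg (expGap_nonneg _)
    (mul_nonneg (by linarith) (expGap_nonneg _))).1 ((mul_eq_zero.1 h).resolve_left (by positivity))
  have hw : log (ρbar / r) = 0 :=
    eq_zero_of_expGap_eq_zero ((mul_eq_zero.1 hgap_w).resolve_left (by linarith))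
  have hrρ : r = ρbar := by
    have := exp_log (div_pos hρbar hr)
    rw [hw, exp_zero, eq_comm, div_eq_one_iff_eq hr.ne'] at this
    exact this.symm
  refine ⟨hrρ, ?_⟩
  have ht := eq_zero_of_expGap_eq_zero hgap_t
  rw [hw, mul_zero, sub_zero, sub_eq_zero, hrρ] at ht
  exact (div_left_inj' (by positivity)).1 ht

end Tangent

section PhiExt

variable {γ cv : ℝ}

lemma toReal_phiExt_of_pos {r : ℝ} (hr : 0 < r) (s : ℝ) :
    (PhiExt γ cv r s).toReal = r ^ γ * exp (s / (cv * r)) := by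
  rw [PhiExt, if_pos hr, ENNReal.toReal_ofReal (by positivity)]

lemma toReal_phiExt_zero (s : ℝ) : (PhiExt γ cv 0 s).toReal = 0 := by
  rw [PhiExt, if_neg (lt_irrefl 0)]
  split_ifs <;> rfl

lemma nonpos_of_phiExt_zero_ne_top {s : ℝ} (h : PhiExt γ cv 0 s ≠ ∞) : s ≤ 0 := by
  by_contra hs
  simp [PhiExt, hs] at h

lemma measurable_phiExt : Measurable fun p : ℝ × ℝ ↦ PhiExt γ cv p.1 p.2 := by
  unfold PhiExt
  refine Measurable.ite (measurableSet_lt measurable_const measurable_fst) ?_ ?_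
  · fun_prop
  · exact Measurable.ite (measurableSet_le measurable_snd measurable_const)
      measurable_const measurable_const

variable {ρbar Sbar : ℝ}

lemma phiTangent_le_toReal_phiExt (hγ : 1 < γ) (hcv : 0 < cv) (hρbar : 0 < ρbar) {r s : ℝ}
    (hr : 0 ≤ r) (hfin : PhiExt γ cv r s ≠ ∞) :
    phiTangent γ cv ρbar Sbar r s ≤ (PhiExt γ cv r s).toReal := by
  rcases hr.lt_or_eq with hr | rfl
  · rw [toReal_phiExt_of_pos hr]
    exact phiTangent_le_rpow_mul_exp hγ hρbar hr s
  · rw [toReal_phiExt_zero]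
    exact (phiTangent_zero_neg hγ hcv hρbar (nonpos_of_phiExt_zero_ne_top hfin)).le

lemma eq_of_toReal_phiExt_eq_phiTangent (hγ : 1 < γ) (hcv : 0 < cv) (hρbar : 0 < ρbar)
    {r s : ℝ} (hr : 0 ≤ r) (hfin : PhiExt γ cv r s ≠ ∞)
    (h : (PhiExt γ cv r s).toReal = phiTangent γ cv ρbar Sbar r s) : r = ρbar ∧ s = Sbar := by
  rcases hr.lt_or_eq with hr | rfl
  · rw [toReal_phiExt_of_pos hr] at h
    exact eq_of_rpow_mul_exp_eq_phiTangent hγ hcv hρbar hr h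
  · rw [toReal_phiExt_zero] at h
    exact absurd h (phiTangent_zero_neg hγ hcv hρbar (nonpos_of_phiExt_zero_ne_top hfin)).ne'

end PhiExt

section Integral

variable {Ω : Type*} [MeasurableSpace Ω] {μ : Measure Ω} {ρ S : Ω → ℝ}
  (γ cv ρbar Sbar : ℝ)

lemma MeasureTheory.Integrable.phiTangent [IsFiniteMeasure μ] (hρ : Integrable ρ μ)
    (hS : Integrable S μ) :
    Integrable (fun x ↦ phiTangent γ cv ρbar Sbar (ρ x) (S x)) μ := by
  unfold _root_.phiTangent
  fun_prop

lemma integral_phiTangent [IsProbabilityMeasure μ] (hρ : Integrable ρ μ) (hS : Integrable S μ) :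
    ∫ x, phiTangent γ cv ρbar Sbar (ρ x) (S x) ∂μ =
      phiTangent γ cv ρbar Sbar (∫ x, ρ x ∂μ) (∫ x, S x ∂μ) := by
  unfold phiTangent
  rw [integral_const_mul, integral_add, integral_add, integral_const, integral_const_mul,
    integral_sub, integral_const, integral_div, integral_sub, integral_const] <;> first
    | fun_prop
    | simp

end Integral

/-- Constant states uniquely maximize the total entropy at fixed mass and energy:
on a probability space, if `ρ ≥ 0`, `∫ρ = ρ̄ > 0`, `∫S ≥ S̄` and
`∫ Φ(ρ,S) = Φ(ρ̄,S̄)`, then `∫S = S̄` and `ρ = ρ̄`, `S = S̄` almost everywhere. -/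
theorem equilibrium_maximizes_entropy (γ cv : ℝ) (hγ : 1 < γ) (hcv : 0 < cv)
    {Ω : Type*} [MeasurableSpace Ω] (μ : Measure Ω) [IsProbabilityMeasure μ]
    (ρ S : Ω → ℝ) (hρi : Integrable ρ μ) (hSi : Integrable S μ)
    (hρ0 : ∀ᵐ x ∂μ, 0 ≤ ρ x)
    (ρbar Sbar : ℝ) (hρbar : 0 < ρbar)
    (hmass : ∫ x, ρ x ∂μ = ρbar) (hent : Sbar ≤ ∫ x, S x ∂μ)
    (henergy : ∫⁻ x, PhiExt γ cv (ρ x) (S x) ∂μ =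
      ENNReal.ofReal (ρbar ^ γ * Real.exp (Sbar / (cv * ρbar)))) :
    (∫ x, S x ∂μ) = Sbar ∧ (∀ᵐ x ∂μ, ρ x = ρbar) ∧ (∀ᵐ x ∂μ, S x = Sbar) := by
  set L : Ω → ℝ := fun x ↦ phiTangent γ cv ρbar Sbar (ρ x) (S x)
  set F : Ω → ℝ := fun x ↦ (PhiExt γ cv (ρ x) (S x)).toReal
  have hmeas : AEMeasurable (fun x ↦ PhiExt γ cv (ρ x) (S x)) μ :=
    measurable_phiExt.comp_aemeasurable (hρi.aemeasurable.prodMk hSi.aemeasurable)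
  have hne_top : ∫⁻ x, PhiExt γ cv (ρ x) (S x) ∂μ ≠ ∞ := henergy ▸ ENNReal.ofReal_ne_top
  have hfin : ∀ᵐ x ∂μ, PhiExt γ cv (ρ x) (S x) < ∞ := ae_lt_top' hmeas hne_top
  have hF : Integrable F μ := integrable_toReal_of_lintegral_ne_top hmeas hne_top
  have hL : Integrable L μ := hρi.phiTangent γ cv ρbar Sbar hSi
  have hLF : L ≤ᵐ[μ] F := by
    filter_upwards [hρ0, hfin] with x hx hxfin
    exact phiTangent_le_toReal_phiExt hγ hcv hρbar hx hxfin.ne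
  have hintF : ∫ x, F x ∂μ = phiTangent γ cv ρbar Sbar ρbar Sbar := by
    rw [integral_toReal hmeas hfin, henergy,
      ENNReal.toReal_ofReal (by positivity), phiTangent_self hρbar]
  have hintL : ∫ x, L x ∂μ = phiTangent γ cv ρbar Sbar ρbar (∫ x, S x ∂μ) := by
    rw [integral_phiTangent γ cv ρbar Sbar hρi hSi, hmass]
  have hSeq : ∫ x, S x ∂μ = Sbar := by
    have hle : ∫ x, L x ∂μ ≤ ∫ x, F x ∂μ := integral_mono_ae hL hF hLF
    rw [hintL, hintF, (strictMono_phiTangent hcv hρbar ρbar).le_iff_le] at hle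
    exact le_antisymm hle hent
  have hFL : F =ᵐ[μ] L :=
    ((integral_eq_iff_of_ae_le hL hF hLF).1 (by rw [hintL, hintF, hSeq])).symm
  have hconst : ∀ᵐ x ∂μ, ρ x = ρbar ∧ S x = Sbar := by
    filter_upwards [hρ0, hfin, hFL] with x hx hxfin hxeq
    exact eq_of_toReal_phiExt_eq_phiTangent hγ hcv hρbar hx hxfin.ne hxeq
  exact ⟨hSeq, hconst.mono fun _ ↦ And.left, hconst.mono fun _ ↦ And.right⟩
end

section
/- Let λ > 0 and (ζₙ) ⊂ (0,∞) be a sequence closed under addition in the sense that for all n, m there is k with ζₙ + ζₘ = ζ_k. Then the functionals F ↦ ∫₀^∞ e^{−(λ+ζₙ)t} F(t) dt, n ∈ ℕ, separate points of L^∞(0,∞): if all these integrals vanish for some F ∈ L^∞(0,∞), then F = 0 a.e. -/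
/-!
Put `z = ζ 0`. By additivity every `(k + 1) z` is some `ζ n`, so the integrable density
`e^{-(λ + z) t} F(t)` on `[0, ∞)` annihilates every power of the bounded injective function
`e^{-z t}`. These powers span a point-separating algebra of bounded continuous functions on the
Polish space `ℝ≥0`, and by Stone–Weierstrass such an algebra determines finite measures; applied
to the positive and negative parts of the density, this forces the density to vanish a.e.
-/

open MeasureTheory Set BoundedContinuousFunction
open scoped NNReal

theorem ae_eq_zero_of_forall_mem_subalgebra_integral_mul_eq_zero
    {E : Type*} [MeasurableSpace E] [TopologicalSpace E] [PolishSpace E] [BorelSpace E]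
    {μ : Measure E} {G : E → ℝ} (hG : Integrable G μ)
    {A : StarSubalgebra ℝ (E →ᵇ ℝ)} (hA : (A.map (toContinuousMapStarₐ ℝ)).SeparatesPoints)
    (h : ∀ g ∈ A, ∫ x, g x * G x ∂μ = 0) : G =ᵐ[μ] 0 := by
  have := isFiniteMeasure_withDensity_ofReal hG.2
  have := isFiniteMeasure_withDensity_ofReal hG.neg.2
  have integral_withDensity (H : E → ℝ) (hH : Integrable H μ) (g : E →ᵇ ℝ) :
      ∫ x, g x ∂μ.withDensity (fun x => ENNReal.ofReal (H x)) = ∫ x, max (H x) 0 * g x ∂μ := by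
    rw [integral_withDensity_eq_integral_toReal_smul₀ hH.1.aemeasurable.ennreal_ofReal
      (ae_of_all _ fun _ => ENNReal.ofReal_lt_top)]
    simp only [ENNReal.toReal_ofReal', smul_eq_mul]
  have integrable_mul (H : E → ℝ) (hH : Integrable H μ) (g : E →ᵇ ℝ) :
      Integrable (fun x => max (H x) 0 * g x) μ :=
    hH.pos_part.mul_bdd g.continuous.aestronglyMeasurable (ae_of_all _ g.norm_coe_le_norm)
  have hP : μ.withDensity (fun x => ENNReal.ofReal (G x))
      = μ.withDensity (fun x => ENNReal.ofReal ((-G) x)) := by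
    refine ext_of_forall_mem_subalgebra_integral_eq_of_polish hA fun g hg => ?_
    rw [integral_withDensity G hG, integral_withDensity _ hG.neg, ← sub_eq_zero,
      ← integral_sub (integrable_mul G hG g) (integrable_mul _ hG.neg g)]
    refine Eq.trans (integral_congr_ae (ae_of_all _ fun x => ?_)) (h g hg)
    simp only [Pi.neg_apply, ← sub_mul, max_zero_sub_max_neg_zero_eq_self, mul_comm]
  rw [withDensity_eq_iff hG.1.aemeasurable.ennreal_ofReal hG.neg.1.aemeasurable.ennreal_ofReal
    hG.lintegral_lt_top.ne] at hP
  filter_upwards [hP] with x hx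
  have hmax := congrArg ENNReal.toReal hx
  simp only [ENNReal.toReal_ofReal', Pi.neg_apply] at hmax
  rw [Pi.zero_apply, ← max_zero_sub_max_neg_zero_eq_self (G x), hmax, sub_self]

theorem ae_eq_zero_of_forall_integral_pow_mul_eq_zero
    {E : Type*} [MeasurableSpace E] [TopologicalSpace E] [PolishSpace E] [BorelSpace E]
    {μ : Measure E} {G : E → ℝ} (hG : Integrable G μ) {e : E →ᵇ ℝ} (he : Function.Injective e)
    (h : ∀ k : ℕ, ∫ x, e x ^ k * G x ∂μ = 0) : G =ᵐ[μ] 0 := by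
  refine ae_eq_zero_of_forall_mem_subalgebra_integral_mul_eq_zero hG
    (A := StarAlgebra.adjoin ℝ {e}) (fun x y hxy =>
      ⟨e, ⟨_, ⟨e, StarAlgebra.subset_adjoin ℝ {e} rfl, rfl⟩, rfl⟩, he.ne hxy⟩) fun g hg => ?_
  have hstar : star e = e := by ext; simp
  replace hg : g ∈ Subalgebra.toSubmodule (Algebra.adjoin ℝ {e}) := by
    simpa [StarAlgebra.adjoin_toSubalgebra, Set.star_singleton, hstar] using
      StarSubalgebra.mem_toSubalgebra.2 hg
  rw [Algebra.adjoin_eq_span] at hg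
  induction hg using Submodule.span_induction with
  | mem g hg =>
    obtain ⟨k, rfl⟩ := Submonoid.mem_closure_singleton.1 hg
    simpa using h k
  | zero => simp
  | add g₁ g₂ _ _ h₁ h₂ =>
    simp only [coe_add, Pi.add_apply, add_mul]
    rw [integral_add, h₁, h₂, add_zero] <;>
      exact hG.bdd_mul (by fun_prop) (ae_of_all _ fun x => norm_coe_le_norm _ x)
  | smul c g _ hg =>
    simp only [coe_smul, smul_eq_mul, mul_assoc, integral_const_mul, hg, mul_zero]

theorem exists_succ_nsmul_eq {ι M : Type*} [AddMonoid M] {ζ : ι → M}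
    (hadd : ∀ n m, ∃ k, ζ n + ζ m = ζ k) (n : ι) (j : ℕ) : ∃ k, (j + 1) • ζ n = ζ k := by
  induction j with
  | zero => exact ⟨n, one_nsmul _⟩
  | succ j ih =>
    obtain ⟨k, hk⟩ := ih
    obtain ⟨k', hk'⟩ := hadd k n
    exact ⟨k', by rw [succ_nsmul, hk, hk']⟩

theorem NNReal.ae_eq_zero_of_forall_integral_exp_pow_mul_eq_zero {μ : Measure ℝ≥0} {z : ℝ}
    (hz : 0 < z) {G : ℝ≥0 → ℝ} (hG : Integrable G μ)
    (h : ∀ k : ℕ, ∫ x, Real.exp (-z * x) ^ k * G x ∂μ = 0) : G =ᵐ[μ] 0 := by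
  let e : ℝ≥0 →ᵇ ℝ := ofNormedAddCommGroup (fun x => Real.exp (-z * x)) (by fun_prop) 1
    fun x => by
      rw [Real.norm_eq_abs, Real.abs_exp, Real.exp_le_one_iff]
      exact mul_nonpos_of_nonpos_of_nonneg (neg_nonpos.2 hz.le) x.2
  have he : Function.Injective e := fun x y hxy =>
    NNReal.eq (mul_left_cancel₀ (neg_ne_zero.2 hz.ne') (Real.exp_injective hxy))
  exact ae_eq_zero_of_forall_integral_pow_mul_eq_zero hG he h

/-- Generalized Lerch theorem: if `(ζₙ)` is a sequence of positive reals closed under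
addition and `F ∈ L^∞(0,∞)` has vanishing Laplace transform at every `λ + ζₙ`,
then `F = 0` a.e. on `(0,∞)`. -/
theorem generalized_lerch (l : ℝ) (hl : 0 < l) (ζ : ℕ → ℝ) (hζ : ∀ n, 0 < ζ n)
    (hadd : ∀ n m : ℕ, ∃ k : ℕ, ζ n + ζ m = ζ k)
    (F : ℝ → ℝ) (hF : Measurable F) (M : ℝ) (hbF : ∀ t, |F t| ≤ M)
    (hvanish : ∀ n : ℕ, ∫ t in Ioi (0:ℝ), Real.exp (-(l + ζ n) * t) * F t = 0) :
    ∀ᵐ t ∂(volume.restrict (Ioi (0:ℝ))), F t = 0 := by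
  let G : ℝ≥0 → ℝ := fun x => Real.exp (-(l + ζ 0) * x) * F x
  have hG_meas : Measurable G := by fun_prop
  let μ : Measure ℝ≥0 := (volume.restrict (Ioi 0)).map Real.toNNReal
  have hG : Integrable G μ := by
    rw [integrable_map_measure hG_meas.aestronglyMeasurable (by fun_prop)]
    refine ((exp_neg_integrableOn_Ioi 0 (by linarith [hζ 0] : 0 < l + ζ 0)).mul_const M).mono'
      (hG_meas.comp measurable_real_toNNReal).aestronglyMeasurable ?_
    filter_upwards [ae_restrict_mem measurableSet_Ioi] with t (ht : 0 < t)
    simp only [Function.comp, G, Real.coe_toNNReal _ ht.le, norm_mul, Real.norm_eq_abs,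
      Real.abs_exp]
    exact mul_le_mul_of_nonneg_left (hbF t) (Real.exp_pos _).le
  have hmoments (k : ℕ) : ∫ x, Real.exp (-ζ 0 * x) ^ k * G x ∂μ = 0 := by
    obtain ⟨n, hn⟩ := exists_succ_nsmul_eq hadd 0 k
    rw [integral_map (by fun_prop) (by fun_prop)]
    refine (setIntegral_congr_fun measurableSet_Ioi fun t (ht : 0 < t) => ?_).trans (hvanish n)
    simp only [G, Real.coe_toNNReal _ ht.le, ← Real.exp_nat_mul, ← mul_assoc, ← Real.exp_add,
      ← hn, nsmul_eq_mul]
    congr 2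
    push_cast
    ring
  filter_upwards [ae_of_ae_map (by fun_prop)
      (NNReal.ae_eq_zero_of_forall_integral_exp_pow_mul_eq_zero (hζ 0) hG hmoments),
    ae_restrict_mem measurableSet_Ioi] with t ht (ht_pos : 0 < t)
  simpa [G, Real.coe_toNNReal _ ht_pos.le, Real.exp_ne_zero] using ht
end
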